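/- Let n be a positive integer divisible by 6. Then the cokernel group G_n is isomorphic to ℤ × ℤ. -/

import Mathlib

/-!
The relations of `G_n` say `[e_{j+1}] = [e_j] - [e_{j-1}]`, so `G_n` is generated by
`x = [e_0]` and `y = [e_1]`, and the classes `[e_j]` run through the six-periodic sequence
`x, y, y - x, -x, -y, x - y`. When `6 ∣ n` this periodic sequence is well defined on `ℤ/nℤ`,
which yields a map `G_n → ℤ × ℤ` sending `x, y` to the standard basis, inverse to the obvious one.
-/

open Matrix

/-- The adjacency matrix of the Cayley graph `C_n` of `ℤ/nℤ` with respect to `{1, n-1}`. -/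
def cayleyAdj (n : ℕ) : Matrix (ZMod n) (ZMod n) ℤ :=
  Matrix.of fun i j => (if j = i + 1 then 1 else 0) + (if j = i - 1 then 1 else 0)

/-- The matrix `B_n = I - A_nᵀ`. -/
def cayleyB (n : ℕ) : Matrix (ZMod n) (ZMod n) ℤ :=
  1 - (cayleyAdj n)ᵀ

/-- The image of `B_n`, viewed as a linear map by matrix-vector multiplication. -/
def imB (n : ℕ) [NeZero n] : Submodule ℤ (ZMod n → ℤ) :=
  LinearMap.range (cayleyB n).mulVecLin

/-- The cokernel group `G_n = (ZMod n → ℤ) ⧸ Im(B_n)`. -/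
abbrev cayleyCoker (n : ℕ) [NeZero n] : Type :=
  (ZMod n → ℤ) ⧸ imB n

/-- The class `[e_i]` of the standard basis vector `e_i` in `G_n`. -/
def eClass (n : ℕ) [NeZero n] (i : ZMod n) : cayleyCoker n :=
  Submodule.Quotient.mk (Pi.single i 1)

section Relations

variable {n : ℕ} [NeZero n] {M : Type*} [AddCommGroup M]

lemma cayleyB_mulVec_single (j : ZMod n) :
    cayleyB n *ᵥ Pi.single j 1 = Pi.single j 1 - Pi.single (j + 1) 1 - Pi.single (j - 1) 1 := by
  classical
  funext i
  simp [mulVec_single, cayleyB, cayleyAdj, one_apply, Pi.single_apply, eq_comm, sub_sub]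

lemma imB_le_ker_iff (L : (ZMod n → ℤ) →ₗ[ℤ] M) :
    imB n ≤ LinearMap.ker L ↔
      ∀ j, L (Pi.single j 1) = L (Pi.single (j + 1) 1) + L (Pi.single (j - 1) 1) := by
  classical
  rw [imB, LinearMap.range_le_ker_iff]
  constructor
  · intro hL j
    have := LinearMap.congr_fun hL (Pi.single j 1)
    simp only [LinearMap.comp_apply, mulVecLin_apply, cayleyB_mulVec_single, map_sub,
      LinearMap.zero_apply] at this
    rw [← sub_eq_zero, ← sub_sub, this]
  · intro hrel
    refine LinearMap.pi_ext' fun j => LinearMap.ext_ring ?_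
    simp only [LinearMap.comp_apply, LinearMap.coe_single, mulVecLin_apply, cayleyB_mulVec_single,
      map_sub, LinearMap.zero_apply]
    rw [sub_sub, ← hrel j, sub_self]

lemma eClass_eq_add (j : ZMod n) : eClass n j = eClass n (j + 1) + eClass n (j - 1) :=
  (imB_le_ker_iff (imB n).mkQ).1 (Submodule.ker_mkQ _).ge j

lemma eq_of_recurrence {x y : ZMod n → M}
    (hx : ∀ j, x j = x (j + 1) + x (j - 1)) (hy : ∀ j, y j = y (j + 1) + y (j - 1))
    (h0 : x 0 = y 0) (h1 : x 1 = y 1) : x = y := by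
  have hnat : ∀ k : ℕ, x k = y k ∧ x (k + 1) = y (k + 1) := by
    intro k
    induction k with
    | zero => simpa using ⟨h0, h1⟩
    | succ k ih =>
      refine ⟨by exact_mod_cast ih.2, ?_⟩
      have ex := hx (k + 1)
      have ey := hy (k + 1)
      rw [add_sub_cancel_right, ih.1, ih.2] at ex
      rw [add_sub_cancel_right] at ey
      push_cast
      exact add_right_cancel (ex.symm.trans ey)
  funext i
  rw [← ZMod.natCast_zmod_val i]
  exact (hnat i.val).1

lemma cayleyCoker_hom_ext {L₁ L₂ : cayleyCoker n →ₗ[ℤ] M}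
    (h0 : L₁ (eClass n 0) = L₂ (eClass n 0)) (h1 : L₁ (eClass n 1) = L₂ (eClass n 1)) :
    L₁ = L₂ := by
  have hrel (L : cayleyCoker n →ₗ[ℤ] M) (j : ZMod n) :
      L (eClass n j) = L (eClass n (j + 1)) + L (eClass n (j - 1)) := by
    rw [eClass_eq_add j, map_add]
  have := eq_of_recurrence (hrel L₁) (hrel L₂) h0 h1
  refine Submodule.linearMap_qext _ (LinearMap.pi_ext' fun j => LinearMap.ext_ring ?_)
  exact congr_fun this j

end Relations

def hexagon : ZMod 6 → ℤ × ℤ := ![(1, 0), (0, 1), (-1, 1), (-1, 0), (0, -1), (1, -1)]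

lemma hexagon_eq_add : ∀ j, hexagon j = hexagon (j + 1) + hexagon (j - 1) := by decide

section Coordinates

variable {n : ℕ} (h : 6 ∣ n)

def hexagonMod (j : ZMod n) : ℤ × ℤ := hexagon (ZMod.castHom h (ZMod 6) j)

lemma hexagonMod_eq_add (j : ZMod n) :
    hexagonMod h j = hexagonMod h (j + 1) + hexagonMod h (j - 1) := by
  simpa only [hexagonMod, map_add, map_sub, map_one] using hexagon_eq_add _

lemma hexagonMod_zero : hexagonMod h 0 = (1, 0) := by
  rw [hexagonMod, map_zero]; rfl

lemma hexagonMod_one : hexagonMod h 1 = (0, 1) := by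
  rw [hexagonMod, map_one]; rfl

variable [NeZero n]

def cokerToIntSq : cayleyCoker n →ₗ[ℤ] ℤ × ℤ :=
  (imB n).liftQ (Fintype.linearCombination ℤ (hexagonMod h)) <| by
    classical
    refine (imB_le_ker_iff _).2 fun j => ?_
    simpa only [Fintype.linearCombination_apply_single, one_smul] using hexagonMod_eq_add h j

lemma cokerToIntSq_eClass (j : ZMod n) : cokerToIntSq h (eClass n j) = hexagonMod h j := by
  classical
  simp [cokerToIntSq, eClass]

variable (n) in
def intSqToCoker : ℤ × ℤ →ₗ[ℤ] cayleyCoker n :=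
  (LinearMap.toSpanSingleton ℤ _ (eClass n 0)).coprod (LinearMap.toSpanSingleton ℤ _ (eClass n 1))

def cokerEquivIntSq : cayleyCoker n ≃ₗ[ℤ] ℤ × ℤ :=
  .ofLinearMap (cokerToIntSq h) (intSqToCoker n)
    (LinearMap.prod_ext
      (LinearMap.ext_ring (by simp [intSqToCoker, cokerToIntSq_eClass, hexagonMod_zero]))
      (LinearMap.ext_ring (by simp [intSqToCoker, cokerToIntSq_eClass, hexagonMod_one])))
    (cayleyCoker_hom_ext
      (by simp [intSqToCoker, cokerToIntSq_eClass, hexagonMod_zero])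
      (by simp [intSqToCoker, cokerToIntSq_eClass, hexagonMod_one]))

end Coordinates

theorem coker_int_sq_of_six_dvd (n : ℕ) [NeZero n]
    (h : 6 ∣ n) :
    Nonempty (cayleyCoker n ≃+ (ℤ × ℤ)) :=
  ⟨(cokerEquivIntSq h).toAddEquiv⟩
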